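/- Let m ≥ 3 be an integer and let A(m) be the dihedral Artin group on generators s, t. Then for all integers p and q, one has t·s^p ≠ s·t^q in A(m). -/

import Mathlib

/-- The alternating product `x y x y ⋯` of length `m`. -/
def altElt {M : Type*} [Monoid M] (x y : M) (m : ℕ) : M :=
  ((List.range m).map (fun i => if i % 2 = 0 then x else y)).prod

/-- The single relation `Π(s,t;m) = Π(t,s;m)` of the dihedral Artin group, on the
two-element generating set `Bool`, where `s = false` and `t = true`. -/
def dihedralArtinRels (m : ℕ) : Set (FreeGroup Bool) :=
  {altElt (FreeGroup.of false) (FreeGroup.of true) m *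
    (altElt (FreeGroup.of true) (FreeGroup.of false) m)⁻¹}

/-- The dihedral Artin group `A(m) = ⟨s, t ∣ Π(s,t;m) = Π(t,s;m)⟩`. -/
abbrev DihedralArtinGroup (m : ℕ) := PresentedGroup (dihedralArtinRels m)

/-- The generator `s` of the dihedral Artin group. -/
def DihedralArtinGroup.s (m : ℕ) : DihedralArtinGroup m := PresentedGroup.of false

/-- The generator `t` of the dihedral Artin group. -/
def DihedralArtinGroup.t (m : ℕ) : DihedralArtinGroup m := PresentedGroup.of true

/-!
The quotient map `A(m) → D_m` sending `s, t` to the reflections `sr 0, sr 1` sends `s ^ p` and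
`t ^ q` to `1` or to that reflection. So `t * s ^ p` lands in `{sr 1, r (-1)}` and `s * t ^ q` in
`{sr 0, r 1}`, and these sets are disjoint as soon as `m ≥ 3`.
-/

theorem altElt_succ {M : Type*} [Monoid M] (x y : M) (n : ℕ) :
    altElt x y (n + 1) = altElt x y n * if n % 2 = 0 then x else y := by
  simp [altElt, List.range_succ]

theorem MonoidHom.map_altElt {M N : Type*} [Monoid M] [Monoid N] (φ : M →* N) (x y : M)
    (n : ℕ) : φ (altElt x y n) = altElt (φ x) (φ y) n := by
  simp [altElt, map_list_prod, Function.comp_def, apply_ite φ]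

theorem zpow_eq_one_or_self_of_mul_self_eq_one {G : Type*} [Group G] {g : G} (hg : g * g = 1)
    (p : ℤ) : g ^ p = 1 ∨ g ^ p = g := by
  obtain ⟨k, rfl | rfl⟩ := Int.even_or_odd' p
  · left; rw [zpow_mul, zpow_two, hg, one_zpow]
  · right; rw [zpow_add_one, zpow_mul, zpow_two, hg, one_zpow, one_mul]

namespace DihedralGroup

variable {n : ℕ}

theorem altElt_sr_two_mul (i j : ZMod n) (k : ℕ) :
    altElt (sr i) (sr j) (2 * k) = r ((k : ZMod n) * (j - i)) := by
  induction k with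
  | zero => simp [altElt]
  | succ k ih =>
    rw [show 2 * (k + 1) = 2 * k + 1 + 1 by ring, altElt_succ, altElt_succ, ih]
    simp only [Nat.mul_mod_right, Nat.mul_add_mod_self_left, Nat.mod_succ, one_ne_zero,
      ↓reduceIte, r_mul_sr, sr_mul_sr, Nat.cast_add, Nat.cast_one, r.injEq]
    ring

theorem altElt_sr_eq_of_natCast_eq_zero {l : ℕ} (hl : (l : ZMod n) = 0) (i j : ZMod n) :
    altElt (sr i) (sr j) l = altElt (sr j) (sr i) l := by
  obtain ⟨k, rfl | rfl⟩ := Nat.even_or_odd' l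
  · rw [altElt_sr_two_mul, altElt_sr_two_mul, r.injEq]
    push_cast at hl
    linear_combination (j - i) * hl
  · simp only [altElt_succ, altElt_sr_two_mul, Nat.mul_mod_right, if_pos, r_mul_sr, sr.injEq]
    push_cast at hl
    linear_combination (i - j) * hl

end DihedralGroup

namespace DihedralArtinGroup

open DihedralGroup

variable {n : ℕ}

def toDihedralGroup (n : ℕ) : DihedralArtinGroup n →* DihedralGroup n :=
  PresentedGroup.toGroup (f := fun b => bif b then sr 1 else sr 0) <| by
    rintro _ rfl
    simp [MonoidHom.map_altElt, altElt_sr_eq_of_natCast_eq_zero (ZMod.natCast_self n)]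

@[simp]
theorem toDihedralGroup_s : toDihedralGroup n (s n) = sr 0 :=
  PresentedGroup.toGroup.of _

@[simp]
theorem toDihedralGroup_t : toDihedralGroup n (t n) = sr 1 :=
  PresentedGroup.toGroup.of _

end DihedralArtinGroup

theorem dihedralArtin_no_square (m : ℕ) (hm : 3 ≤ m) :
    ∀ p q : ℤ,
      DihedralArtinGroup.t m * (DihedralArtinGroup.s m) ^ p ≠
        DihedralArtinGroup.s m * (DihedralArtinGroup.t m) ^ q := by
  intro p q h
  have _ : Fact (1 < m) := ⟨by omega⟩
  have _ : Fact (2 < m) := ⟨hm⟩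
  have h' := congrArg (DihedralArtinGroup.toDihedralGroup m) h
  simp only [map_mul, map_zpow, DihedralArtinGroup.toDihedralGroup_s,
    DihedralArtinGroup.toDihedralGroup_t] at h'
  -- Of the four cases only `t * s = s * t`, i.e. `r (-1) = r 1`, survives `simp`.
  obtain hp | hp :=
    zpow_eq_one_or_self_of_mul_self_eq_one (DihedralGroup.sr_mul_self (0 : ZMod m)) p <;>
    obtain hq | hq :=
      zpow_eq_one_or_self_of_mul_self_eq_one (DihedralGroup.sr_mul_self (1 : ZMod m)) q <;>
    simp [hp, hq, DihedralGroup.sr_mul_sr] at h'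
  exact ZMod.neg_one_ne_one h'
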